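/- Let K be a convex body in S^d. Then I_{S^d}(K) is equal to the minimum number n for which there exist a point x in the interior of the polar body K* and n open hemispheres of S^d whose boundary great spheres all pass through x, such that every exposed face of K* is contained in at least one of the n open hemispheres. -/

import Mathlib

open RealInnerProductSpace Metric Set

noncomputable section

/-- Euclidean `n`-space. -/
abbrev Euc (n : ℕ) := EuclideanSpace ℝ (Fin n)

/-- The unit sphere `S^d` in `ℝ^{d+1}`. -/
def uSphere (d : ℕ) : Set (Euc (d + 1)) := Metric.sphere 0 1

/-- Radial (normalizing) projection onto the unit sphere. -/
def nproj {n : ℕ} (x : Euc n) : Euc n := ‖x‖⁻¹ • x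

/-- The spherical segment (shorter great-circle arc) with endpoints `p` and `q`
(meaningful when `p ≠ -q`). -/
def sphSeg {n : ℕ} (p q : Euc n) : Set (Euc n) :=
  (fun t : ℝ => nproj ((1 - t) • p + t • q)) '' Set.Icc 0 1

/-- The relative interior of the spherical segment with endpoints `p` and `q`. -/
def sphOpenSeg {n : ℕ} (p q : Euc n) : Set (Euc n) :=
  (fun t : ℝ => nproj ((1 - t) • p + t • q)) '' Set.Ioo 0 1

/-- The great circle through `p` and `q`. -/
def greatCircle (d : ℕ) (p q : Euc (d + 1)) : Set (Euc (d + 1)) :=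
  {z ∈ uSphere d | z ∈ Submodule.span ℝ {p, q}}

/-- The open hemisphere with center `x`. -/
def openHemi (d : ℕ) (x : Euc (d + 1)) : Set (Euc (d + 1)) :=
  {y ∈ uSphere d | 0 < ⟪x, y⟫}

/-- The `(d-1)`-dimensional great sphere of `S^d` with pole `u`. -/
def greatSphere (d : ℕ) (u : Euc (d + 1)) : Set (Euc (d + 1)) :=
  {y ∈ uSphere d | ⟪u, y⟫ = 0}

/-- A set `C ⊆ S^d` is spherically convex if it is contained in an open hemisphere
and contains the shorter arc connecting any two of its points. -/
def SphConvex (d : ℕ) (C : Set (Euc (d + 1))) : Prop :=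
  C ⊆ uSphere d ∧ (∃ x ∈ uSphere d, C ⊆ openHemi d x) ∧
    ∀ p ∈ C, ∀ q ∈ C, sphSeg p q ⊆ C

/-- The interior of `K` relative to the sphere `S^d`. -/
def sphInt (d : ℕ) (K : Set (Euc (d + 1))) : Set (Euc (d + 1)) :=
  {x ∈ uSphere d | ∃ U : Set (Euc (d + 1)), IsOpen U ∧ x ∈ U ∧ U ∩ uSphere d ⊆ K}

/-- The boundary of a closed set `K ⊆ S^d` relative to the sphere `S^d`. -/
def sphBd (d : ℕ) (K : Set (Euc (d + 1))) : Set (Euc (d + 1)) := K \ sphInt d K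

/-- A convex body in `S^d`: a compact spherically convex set with nonempty interior
relative to `S^d`. -/
def IsSphBody (d : ℕ) (K : Set (Euc (d + 1))) : Prop :=
  IsCompact K ∧ SphConvex d K ∧ (sphInt d K).Nonempty

/-- The boundary point `q` of `K` is illuminated from the point `p`. -/
def SphIlluminated (d : ℕ) (K : Set (Euc (d + 1))) (p q : Euc (d + 1)) : Prop :=
  q ≠ -p ∧ sphSeg p q ∩ sphInt d K = ∅ ∧ (greatCircle d p q ∩ sphInt d K).Nonempty

/-- The set `S` illuminates the convex body `K ⊆ S^d`. -/
def SphIlluminates (d : ℕ) (K S : Set (Euc (d + 1))) : Prop :=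
  ∀ q ∈ sphBd d K, ∃ p ∈ S, SphIlluminated d K p q

/-- The illumination number of a convex body `K` in `S^d`: the smallest cardinality of
a set illuminating `K` and lying on a `(d-1)`-dimensional great sphere disjoint from `K`. -/
def sphIllumNumber (d : ℕ) (K : Set (Euc (d + 1))) : ℕ∞ :=
  sInf {n : ℕ∞ | ∃ u ∈ uSphere d, greatSphere d u ∩ K = ∅ ∧
    ∃ S : Finset (Euc (d + 1)), ↑S ⊆ greatSphere d u ∧ SphIlluminates d K ↑S ∧
      (S.card : ℕ∞) = n}

/-- A convex body in a Euclidean space: compact, convex, with nonempty interior. -/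
def IsConvexBody {n : ℕ} (K : Set (Euc n)) : Prop :=
  IsCompact K ∧ Convex ℝ K ∧ (interior K).Nonempty

/-- The boundary point `p` of `K` is illuminated from the direction `v`. -/
def IlluminatedDir {n : ℕ} (K : Set (Euc n)) (v p : Euc n) : Prop :=
  ∃ t : ℝ, 0 < t ∧ p + t • v ∈ interior K

/-- The finite set of unit vectors `D` illuminates the convex body `K`. -/
def IlluminatesDirs {n : ℕ} (D : Finset (Euc n)) (K : Set (Euc n)) : Prop :=
  (∀ v ∈ D, ‖v‖ = 1) ∧ ∀ p ∈ frontier K, ∃ v ∈ D, IlluminatedDir K v p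

/-- The illumination number of a convex body in Euclidean space. -/
def illumNumber {n : ℕ} (K : Set (Euc n)) : ℕ∞ :=
  sInf {m : ℕ∞ | ∃ D : Finset (Euc n), IlluminatesDirs D K ∧ (D.card : ℕ∞) = m}

/-- The illumination number of a convex body `K` of an affine subspace of a Euclidean
space, computed within the affine span of `K` (directions are parallel to the affine
span; interior and boundary are relative to the affine span). -/
def intIllumNumber {n : ℕ} (K : Set (Euc n)) : ℕ∞ :=
  sInf {m : ℕ∞ | ∃ D : Finset (Euc n),
    (∀ v ∈ D, ‖v‖ = 1 ∧ v ∈ (affineSpan ℝ K).direction) ∧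
    (∀ p ∈ intrinsicFrontier ℝ K, ∃ v ∈ D, ∃ t : ℝ, 0 < t ∧
      p + t • v ∈ intrinsicInterior ℝ K) ∧
    (D.card : ℕ∞) = m}

/-- A face of a convex body `K` in Euclidean space: a convex subset `F ⊆ K` such that
any segment of `K` whose relative interior meets `F` is contained in `F`. -/
def IsFace {n : ℕ} (K F : Set (Euc n)) : Prop :=
  F ⊆ K ∧ Convex ℝ F ∧
    ∀ x ∈ K, ∀ y ∈ K, (openSegment ℝ x y ∩ F).Nonempty → segment ℝ x y ⊆ F

/-- The dimension of a subset of a Euclidean space (dimension of its affine hull). -/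
def faceDim {n : ℕ} (F : Set (Euc n)) : ℕ := Module.finrank ℝ (vectorSpan ℝ F)

/-- A face of a convex body `K` in `S^d`: a spherically convex subset `F ⊆ K` such that
any spherical segment of `K` whose relative interior meets `F` is contained in `F`. -/
def IsSphFace (d : ℕ) (K F : Set (Euc (d + 1))) : Prop :=
  F ⊆ K ∧ SphConvex d F ∧
    ∀ p ∈ K, ∀ q ∈ K, (sphOpenSeg p q ∩ F).Nonempty → sphSeg p q ⊆ F

/-- The (spherical) dimension of a subset `F` of `S^d`: one less than the dimension of
its linear hull. -/
def sphFaceDim (d : ℕ) (F : Set (Euc (d + 1))) : ℕ :=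
  Module.finrank ℝ (Submodule.span ℝ F) - 1

/-- The polar body of a convex body `K ⊆ S^d`. -/
def sphPolar (d : ℕ) (K : Set (Euc (d + 1))) : Set (Euc (d + 1)) :=
  {x ∈ uSphere d | ∀ y ∈ K, ⟪x, y⟫ ≤ 0}

/-- An exposed face of a convex body `L` in `S^d`: a nonempty intersection of `L`
with a supporting great sphere. -/
def IsSphExposedFace (d : ℕ) (L F : Set (Euc (d + 1))) : Prop :=
  F.Nonempty ∧ ∃ u ∈ uSphere d, (∀ y ∈ L, ⟪u, y⟫ ≤ 0) ∧ F = {y ∈ L | ⟪u, y⟫ = 0}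

/-- The conjugate face of an exposed face `F` of a convex body `K ⊆ S^d`. -/
def conjFace (d : ℕ) (K F : Set (Euc (d + 1))) : Set (Euc (d + 1)) :=
  {x ∈ sphPolar d K | ∀ y ∈ F, ⟪x, y⟫ = 0}

/-- Two Euclidean convex bodies are combinatorially equivalent if there is a
homeomorphism between their boundaries mapping faces to faces. -/
def CombEquiv {n : ℕ} (K K' : Set (Euc n)) : Prop :=
  ∃ h : (frontier K) ≃ₜ (frontier K'),
    ∀ X : Set (frontier K),
      IsFace K (Subtype.val '' X) ↔ IsFace K' (Subtype.val '' (h '' X))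

/-- The combinatorial illumination number of a Euclidean convex body `K`: the smallest
number of directions that illuminate some convex body combinatorially equivalent to `K`. -/
def combIllumNumber {n : ℕ} (K : Set (Euc n)) : ℕ∞ :=
  sInf {m : ℕ∞ | ∃ K' : Set (Euc n), IsConvexBody K' ∧ CombEquiv K K' ∧
    ∃ D : Finset (Euc n), IlluminatesDirs D K' ∧ (D.card : ℕ∞) = m}

/-- A convex polytope in `S^d`: a convex body that is the intersection of finitely many
closed hemispheres. -/
def IsSphPolytope (d : ℕ) (P : Set (Euc (d + 1))) : Prop :=
  IsSphBody d P ∧ ∃ s : Finset (Euc (d + 1)), (∀ u ∈ s, u ∈ uSphere d) ∧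
    P = uSphere d ∩ {y | ∀ u ∈ s, ⟪u, y⟫ ≤ 0}

end

/-!
Everything is transported to the polar body `K*` through the duality
`z ∈ int K ↔ ⟪y, z⟫ < 0` for all `y ∈ K*`, and `x ∈ int K* ↔ ⟪y, x⟫ < 0` for all `y ∈ K`;
the nontrivial half is a Hahn–Banach separation of a point from the (closed, convex) cone over `K`.
A great sphere missing the connected set `K` leaves `K` strictly on one side, so one of its poles
`x` lies in `int K*`, and every `x ∈ int K*` is such a pole. The exposed faces of `K*` are exactly
the sets `F_q = {y ∈ K* | ⟪q, y⟫ = 0}` with `q ∈ ∂K`. Finally, for `p ⊥ x`, the point `q ∈ ∂K` is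
illuminated from `p` iff `F_q` lies in the open hemisphere centred at `p`: if some `y ∈ F_q` had
`⟪p, y⟫ ≤ 0`, an interior point `α p + β q` of the great circle would have `α ≥ 0 < β` and lie on
the arc from `p` to `q`; conversely, `⟪p, ·⟫ > 0` on `F_q` keeps the arc out of `int K` and, by
compactness of `K*`, makes `⟪y, q - s p⟫ < 0` on all of `K*` for a suitable `s`, so that the
great circle meets `int K` in the direction of `q - s p`.
-/

open Filter Topology

section

variable {n : ℕ}

lemma nproj_of_norm_eq_one {x : Euc n} (h : ‖x‖ = 1) : nproj x = x := by
  simp [nproj, h]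

lemma norm_nproj {x : Euc n} (h : x ≠ 0) : ‖nproj x‖ = 1 := by
  simp [nproj, norm_smul, h]

lemma norm_smul_nproj (x : Euc n) : ‖x‖ • nproj x = x := by
  rcases eq_or_ne x 0 with rfl | h
  · simp
  · simp [nproj, smul_smul, h]

lemma nproj_smul {c : ℝ} (hc : 0 < c) (x : Euc n) : nproj (c • x) = nproj x := by
  simp only [nproj, norm_smul, Real.norm_eq_abs, abs_of_pos hc, smul_smul, mul_inv]
  field_simp

lemma inner_nproj (y x : Euc n) : ⟪y, nproj x⟫ = ‖x‖⁻¹ * ⟪y, x⟫ :=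
  real_inner_smul_right _ _ _

lemma continuousAt_nproj {x : Euc n} (hx : x ≠ 0) : ContinuousAt nproj x :=
  (continuous_norm.continuousAt.inv₀ (norm_ne_zero_iff.mpr hx)).smul continuousAt_id

lemma inner_smul_add_smul_pos {x p q : Euc n} {α β : ℝ} (hp : 0 < ⟪x, p⟫) (hq : 0 < ⟪x, q⟫)
    (hα : 0 ≤ α) (hβ : 0 ≤ β) (hαβ : 0 < α + β) : 0 < ⟪x, α • p + β • q⟫ := by
  rw [inner_add_right, real_inner_smul_right, real_inner_smul_right]
  rcases le_total ⟪x, p⟫ ⟪x, q⟫ with h | h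
  · nlinarith [mul_nonneg hβ (sub_nonneg.2 h), mul_pos hαβ hp]
  · nlinarith [mul_nonneg hα (sub_nonneg.2 h), mul_pos hαβ hq]

lemma nproj_mem_sphSeg {p q : Euc n} {α β : ℝ} (hα : 0 ≤ α) (hβ : 0 ≤ β) (hαβ : 0 < α + β) :
    nproj (α • p + β • q) ∈ sphSeg p q := by
  refine ⟨β / (α + β), ⟨by positivity, div_le_one_of_le₀ (by linarith) hαβ.le⟩, ?_⟩
  have hcomb : (1 - β / (α + β)) • p + (β / (α + β)) • q = (α + β)⁻¹ • (α • p + β • q) := by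
    rw [smul_add, smul_smul, smul_smul]
    congr 2
    · field_simp
      ring
    · field_simp
  simp only [hcomb, nproj_smul (inv_pos.2 hαβ)]

lemma left_mem_sphSeg {p : Euc n} (hp : ‖p‖ = 1) (q : Euc n) : p ∈ sphSeg p q :=
  ⟨0, left_mem_Icc.2 zero_le_one, by simp [nproj_of_norm_eq_one hp]⟩

lemma right_mem_sphSeg (p : Euc n) {q : Euc n} (hq : ‖q‖ = 1) : q ∈ sphSeg p q :=
  ⟨1, right_mem_Icc.2 zero_le_one, by simp [nproj_of_norm_eq_one hq]⟩

lemma isPreconnected_sphSeg {x p q : Euc n} (hp : 0 < ⟪x, p⟫) (hq : 0 < ⟪x, q⟫) :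
    IsPreconnected (sphSeg p q) := by
  refine isPreconnected_Icc.image _ fun t ht => ContinuousAt.continuousWithinAt ?_
  have hne : (1 - t) • p + t • q ≠ 0 := by
    intro h
    have := inner_smul_add_smul_pos hp hq (sub_nonneg.2 ht.2) ht.1 (by linarith)
    simp [h] at this
  exact (continuousAt_nproj hne).comp (f := fun t : ℝ => (1 - t) • p + t • q) (by fun_prop)

lemma isOpen_setOf_forall_inner_neg {A : Set (Euc n)} (hA : IsCompact A) :
    IsOpen {w : Euc n | ∀ y ∈ A, ⟪y, w⟫ < 0} :=
  isOpen_iff_eventually.2 fun _ hw => hA.eventually_forall_of_forall_eventually fun y hy =>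
    (continuous_snd.inner continuous_fst).continuousAt.eventually_lt continuousAt_const
      (hw y hy)

end

section sphere

variable {d : ℕ} {K : Set (Euc (d + 1))}

lemma mem_uSphere_iff {x : Euc (d + 1)} : x ∈ uSphere d ↔ ‖x‖ = 1 :=
  mem_sphere_zero_iff_norm

lemma ne_zero_of_mem_uSphere {x : Euc (d + 1)} (hx : x ∈ uSphere d) : x ≠ 0 :=
  ne_zero_of_mem_sphere one_ne_zero ⟨x, hx⟩

lemma nproj_mem_uSphere {x : Euc (d + 1)} (hx : x ≠ 0) : nproj x ∈ uSphere d :=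
  mem_uSphere_iff.2 (norm_nproj hx)

lemma greatSphere_neg (u : Euc (d + 1)) : greatSphere d (-u) = greatSphere d u := by
  simp [greatSphere]

lemma SphConvex.forall_inner_neg_or_forall_inner_pos (hK : SphConvex d K) {u : Euc (d + 1)}
    (hu : greatSphere d u ∩ K = ∅) : (∀ y ∈ K, ⟪u, y⟫ < 0) ∨ ∀ y ∈ K, 0 < ⟪u, y⟫ := by
  obtain ⟨hKS, ⟨x, -, hKx⟩, hseg⟩ := hK
  have hne : ∀ y ∈ K, ⟪u, y⟫ ≠ 0 := fun y hy h =>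
    (eq_empty_iff_forall_notMem.1 hu) y ⟨⟨hKS hy, h⟩, hy⟩
  by_contra! h
  obtain ⟨⟨a, ha, hua⟩, b, hb, hub⟩ := h
  obtain ⟨y, hy, hy0⟩ := (isPreconnected_sphSeg (hKx hb).2 (hKx ha).2).intermediate_value
    (left_mem_sphSeg (mem_uSphere_iff.1 (hKS hb)) a)
    (right_mem_sphSeg b (mem_uSphere_iff.1 (hKS ha)))
    (continuous_const.inner continuous_id).continuousOn ⟨hub, hua⟩
  exact hne y (hseg b hb a ha hy) hy0

def coneOver (K : Set (Euc (d + 1))) : Set (Euc (d + 1)) :=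
  {z | ∃ t : ℝ, 0 ≤ t ∧ ∃ k ∈ K, z = t • k}

lemma convex_coneOver (hK : SphConvex d K) : Convex ℝ (coneOver K) := by
  rintro _ ⟨s, hs, a, ha, rfl⟩ _ ⟨t, ht, b, hb, rfl⟩ α β hα hβ -
  rw [smul_smul, smul_smul]
  rcases (add_nonneg (mul_nonneg hα hs) (mul_nonneg hβ ht)).eq_or_lt with h | h
  · have h₁ : α * s = 0 := by linarith [mul_nonneg hα hs, mul_nonneg hβ ht]
    have h₂ : β * t = 0 := by linarith [mul_nonneg hα hs, mul_nonneg hβ ht]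
    exact ⟨0, le_rfl, a, ha, by simp [h₁, h₂]⟩
  · exact ⟨_, norm_nonneg _, _,
      hK.2.2 a ha b hb (nproj_mem_sphSeg (mul_nonneg hα hs) (mul_nonneg hβ ht) h),
      (norm_smul_nproj _).symm⟩

lemma isClosed_coneOver (hKc : IsCompact K) (hKS : K ⊆ uSphere d) : IsClosed (coneOver K) := by
  refine isSeqClosed_iff_isClosed.1 fun z p hz hzp => ?_
  choose t ht k hk hzk using hz
  have hnorm : ∀ m, ‖z m‖ • k m = z m := fun m => by
    rw [hzk m, norm_smul, mem_uSphere_iff.1 (hKS (hk m)), mul_one, Real.norm_of_nonneg (ht m)]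
  obtain ⟨c, hc, φ, hφ, hkc⟩ := hKc.tendsto_subseq hk
  have hlim : Tendsto (fun m => z (φ m)) atTop (𝓝 (‖p‖ • c)) := by
    simpa only [Function.comp_def, hnorm] using
      ((continuous_norm.tendsto p).comp (hzp.comp hφ.tendsto_atTop)).smul hkc
  exact ⟨‖p‖, norm_nonneg p, c, hc, tendsto_nhds_unique (hzp.comp hφ.tendsto_atTop) hlim⟩

lemma mem_coneOver_iff (hKS : K ⊆ uSphere d) {z : Euc (d + 1)} (hz : z ∈ uSphere d) :
    z ∈ coneOver K ↔ z ∈ K := by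
  refine ⟨?_, fun h => ⟨1, zero_le_one, z, h, (one_smul ℝ z).symm⟩⟩
  rintro ⟨t, ht, k, hk, rfl⟩
  have ht1 : t = 1 := by
    simpa [mem_uSphere_iff, norm_smul, mem_uSphere_iff.1 (hKS hk), abs_of_nonneg ht] using hz
  simpa [ht1] using hk

end sphere

section polar

variable {d : ℕ} {K : Set (Euc (d + 1))}

lemma sphInt_subset (L : Set (Euc (d + 1))) : sphInt d L ⊆ L :=
  fun _ ⟨hxS, _, _, hxU, hUL⟩ => hUL ⟨hxU, hxS⟩

lemma isCompact_sphPolar (K : Set (Euc (d + 1))) : IsCompact (sphPolar d K) := by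
  have hpolar : sphPolar d K = uSphere d ∩ ⋂ y ∈ K, {x | ⟪x, y⟫ ≤ 0} := by
    ext x
    simp [sphPolar]
  rw [hpolar]
  exact (isCompact_sphere 0 1).inter_right <| isClosed_biInter fun y _ =>
    isClosed_le (continuous_id.inner continuous_const) continuous_const

lemma exists_mem_sphPolar_inner_pos (hK : IsSphBody d K) {z : Euc (d + 1)} (hz : z ∈ uSphere d)
    (hzK : z ∉ K) : ∃ y ∈ sphPolar d K, 0 < ⟪y, z⟫ := by
  obtain ⟨hKc, hKconv, hKint⟩ := hK
  have hzC : z ∉ coneOver K := fun h => hzK ((mem_coneOver_iff hKconv.1 hz).1 h)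
  obtain ⟨f, u, hfu, hufz⟩ :=
    geometric_hahn_banach_closed_point (convex_coneOver hKconv) (isClosed_coneOver hKc hKconv.1) hzC
  obtain ⟨a, ha⟩ := hKint.mono (sphInt_subset K)
  have hu : 0 < u := by simpa using hfu 0 ⟨0, le_rfl, a, ha, (zero_smul ℝ a).symm⟩
  -- a linear functional bounded above on a cone is nonpositive on it
  have hfK : ∀ w ∈ K, f w ≤ 0 := fun w hw => by
    by_contra! hfw
    have := hfu _ ⟨u / f w, (div_pos hu hfw).le, w, hw, rfl⟩
    rw [map_smul, smul_eq_mul, div_mul_cancel₀ u hfw.ne'] at this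
    exact this.false
  set v := (InnerProductSpace.toDual ℝ (Euc (d + 1))).symm f
  have hv : ∀ w, ⟪v, w⟫ = f w := fun w => InnerProductSpace.toDual_symm_apply
  have hvz : 0 < ⟪v, z⟫ := (hv z).symm ▸ hu.trans hufz
  have hv0 : v ≠ 0 := fun h => by simp [h] at hvz
  refine ⟨nproj v, ⟨nproj_mem_uSphere hv0, fun w hw => ?_⟩, ?_⟩
  · rw [real_inner_comm, inner_nproj, real_inner_comm, hv]
    exact mul_nonpos_of_nonneg_of_nonpos (by positivity) (hfK w hw)
  · rw [real_inner_comm, inner_nproj, real_inner_comm]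
    exact mul_pos (by positivity) hvz

lemma inner_neg_of_mem_sphInt {L : Set (Euc (d + 1))} {y z : Euc (d + 1)} (hz : z ∈ sphInt d L)
    (hy : y ≠ 0) (hL : ∀ w ∈ L, ⟪y, w⟫ ≤ 0) : ⟪y, z⟫ < 0 := by
  obtain ⟨hzS, U, hU, hzU, hUL⟩ := hz
  by_contra! hyz
  have hcont : ContinuousAt (fun t : ℝ => nproj (z + t • y)) 0 :=
    (continuousAt_nproj (by simpa using ne_zero_of_mem_uSphere hzS)).comp
      (f := fun t : ℝ => z + t • y) (by fun_prop)
  have hU' : ∀ᶠ t in 𝓝[>] (0 : ℝ), nproj (z + t • y) ∈ U := by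
    refine nhdsWithin_le_nhds (hcont.eventually_mem ?_)
    simpa [nproj_of_norm_eq_one (mem_uSphere_iff.1 hzS)] using hU.mem_nhds hzU
  obtain ⟨t, htU, ht⟩ := (hU'.and self_mem_nhdsWithin).exists
  -- moving `z` towards `y` stays in `L` but strictly increases `⟪y, ·⟫`
  have hpos : 0 < ⟪y, z + t • y⟫ := by
    rw [inner_add_right, real_inner_smul_right, real_inner_self_eq_norm_sq]
    have : 0 < ‖y‖ := norm_pos_iff.2 hy
    have : (0 : ℝ) < t := ht
    positivity
  have hv : z + t • y ≠ 0 := fun h => by simp [h] at hpos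
  have hle := hL _ (hUL ⟨htU, nproj_mem_uSphere hv⟩)
  rw [inner_nproj] at hle
  exact hle.not_gt (mul_pos (by positivity) hpos)

lemma mem_sphInt_of_forall_inner_neg {L A : Set (Euc (d + 1))} (hA : IsCompact A)
    (hAL : ∀ w ∈ uSphere d, (∀ y ∈ A, ⟪y, w⟫ < 0) → w ∈ L) {z : Euc (d + 1)}
    (hz : z ∈ uSphere d) (hzA : ∀ y ∈ A, ⟪y, z⟫ < 0) : z ∈ sphInt d L :=
  ⟨hz, _, isOpen_setOf_forall_inner_neg hA, hzA, fun w hw => hAL w hw.2 hw.1⟩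

lemma sphInt_eq_setOf_sphPolar (hK : IsSphBody d K) :
    sphInt d K = {z ∈ uSphere d | ∀ y ∈ sphPolar d K, ⟪y, z⟫ < 0} := by
  ext z
  refine ⟨fun hz => ⟨hz.1, fun y hy => inner_neg_of_mem_sphInt hz (ne_zero_of_mem_uSphere hy.1)
    hy.2⟩, fun ⟨hz, hzA⟩ => mem_sphInt_of_forall_inner_neg (isCompact_sphPolar K) ?_ hz hzA⟩
  intro w hw hwA
  by_contra hwK
  obtain ⟨y, hy, hyw⟩ := exists_mem_sphPolar_inner_pos hK hw hwK
  exact (hwA y hy).not_gt hyw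

lemma sphInt_sphPolar (hKc : IsCompact K) (hKS : K ⊆ uSphere d) :
    sphInt d (sphPolar d K) = {z ∈ uSphere d | ∀ y ∈ K, ⟪y, z⟫ < 0} := by
  ext z
  refine ⟨fun hz => ⟨hz.1, fun y hy => inner_neg_of_mem_sphInt hz (ne_zero_of_mem_uSphere (hKS hy))
    fun w hw => real_inner_comm w y ▸ hw.2 y hy⟩,
    fun ⟨hz, hzA⟩ => mem_sphInt_of_forall_inner_neg hKc ?_ hz hzA⟩
  exact fun w hw hwK => ⟨hw, fun y hy => real_inner_comm y w ▸ (hwK y hy).le⟩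

lemma exists_mem_sphPolar_inner_eq_zero (hK : IsSphBody d K) {q : Euc (d + 1)}
    (hq : q ∈ sphBd d K) : ∃ y ∈ sphPolar d K, ⟪y, q⟫ = 0 := by
  obtain ⟨hqK, hqI⟩ := hq
  rw [sphInt_eq_setOf_sphPolar hK] at hqI
  obtain ⟨y, hy, hyq⟩ : ∃ y ∈ sphPolar d K, 0 ≤ ⟪y, q⟫ := by
    by_contra! h
    exact hqI ⟨hK.2.1.1 hqK, h⟩
  exact ⟨y, hy, le_antisymm (hy.2 q hqK) hyq⟩

lemma isSphExposedFace_sphPolar_iff (hK : IsSphBody d K) {F : Set (Euc (d + 1))} :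
    IsSphExposedFace d (sphPolar d K) F ↔ ∃ q ∈ sphBd d K, F = {y ∈ sphPolar d K | ⟪q, y⟫ = 0} := by
  constructor
  · rintro ⟨⟨y₀, hy₀F⟩, q, hq, hqK, rfl⟩
    obtain ⟨hy₀, hqy₀⟩ := hy₀F
    have hqK' : q ∈ K := by
      by_contra h
      obtain ⟨y, hy, hyq⟩ := exists_mem_sphPolar_inner_pos hK hq h
      exact (hqK y hy).not_gt (real_inner_comm y q ▸ hyq)
    refine ⟨q, ⟨hqK', fun hint => ?_⟩, rfl⟩
    have := ((sphInt_eq_setOf_sphPolar hK ▸ hint).2 y₀ hy₀)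
    rw [real_inner_comm, hqy₀] at this
    exact this.false
  · rintro ⟨q, hq, rfl⟩
    obtain ⟨y, hy, hyq⟩ := exists_mem_sphPolar_inner_eq_zero hK hq
    exact ⟨⟨y, hy, real_inner_comm q y ▸ hyq⟩, q, hK.2.1.1 hq.1,
      fun y hy => real_inner_comm q y ▸ hy.2 q hq.1, rfl⟩

end polar

section illumination

variable {d : ℕ} {K : Set (Euc (d + 1))}

lemma exists_forall_inner_sub_smul_neg {p q : Euc (d + 1)} (hp : p ∈ uSphere d)
    (hq : q ∈ K) (hcov : ∀ y ∈ sphPolar d K, ⟪y, q⟫ = 0 → 0 < ⟪p, y⟫) :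
    ∃ s : ℝ, ∀ y ∈ sphPolar d K, ⟪y, q - s • p⟫ < 0 := by
  set A := {y ∈ sphPolar d K | ⟪p, y⟫ ≤ 0}
  have hA : IsCompact A := (isCompact_sphPolar K).inter_right
    (isClosed_le (continuous_const.inner continuous_id) continuous_const :
      IsClosed {y : Euc (d + 1) | ⟪p, y⟫ ≤ 0})
  have hAq : ∀ y ∈ A, 0 < -⟪y, q⟫ := fun y ⟨hy, hpy⟩ =>
    neg_pos.2 <| (hy.2 q hq).lt_of_ne fun h => (hcov y hy h).not_ge hpy
  obtain ⟨c, hc, hcA⟩ :=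
    hA.exists_forall_le' (continuous_id.inner continuous_const).neg.continuousOn hAq
  refine ⟨c / 2, fun y hy => ?_⟩
  rw [inner_sub_right, real_inner_smul_right, real_inner_comm p y]
  by_cases hpy : ⟪p, y⟫ ≤ 0
  · have hcy : c ≤ -⟪y, q⟫ := hcA y ⟨hy, hpy⟩
    have hpy1 : -1 ≤ ⟪p, y⟫ := by
      have := abs_real_inner_le_norm p y
      rw [mem_uSphere_iff.1 hp, mem_uSphere_iff.1 hy.1, one_mul] at this
      exact (abs_le.1 this).1
    nlinarith [mul_le_mul_of_nonneg_left hpy1 hc.le]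
  · nlinarith [hy.2 q hq]

lemma subset_openHemi_of_sphIlluminated (hK : IsSphBody d K) {x p q : Euc (d + 1)}
    (hx : x ∈ sphInt d (sphPolar d K)) (hpx : ⟪p, x⟫ = 0) (hq : q ∈ sphBd d K)
    (hill : SphIlluminated d K p q) :
    {y ∈ sphPolar d K | ⟪q, y⟫ = 0} ⊆ openHemi d p := by
  rw [sphInt_sphPolar hK.1 hK.2.1.1] at hx
  obtain ⟨-, hseg, z, ⟨-, hz⟩, hzI⟩ := hill
  rintro y ⟨hy, hqy⟩
  refine ⟨hy.1, ?_⟩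
  obtain ⟨α, β, rfl⟩ := Submodule.mem_span_pair.1 hz
  have hβ : 0 < β := by
    have := hx.2 _ (sphInt_subset K hzI)
    rw [inner_add_left, real_inner_smul_left, real_inner_smul_left, hpx, mul_zero, zero_add] at this
    nlinarith [hx.2 q hq.1]
  have hαy : α * ⟪y, p⟫ < 0 := by
    have := (sphInt_eq_setOf_sphPolar hK ▸ hzI).2 y hy
    rwa [inner_add_right, real_inner_smul_right, real_inner_smul_right, real_inner_comm q y, hqy,
      mul_zero, add_zero] at this
  by_contra! hpy
  rw [real_inner_comm] at hpy
  -- otherwise `z` lies on the arc from `p` to `q`, which avoids the interior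
  have hα : 0 ≤ α := by nlinarith
  have hzseg := nproj_mem_sphSeg (p := p) (q := q) hα hβ.le (by linarith)
  rw [nproj_of_norm_eq_one (mem_uSphere_iff.1 hzI.1)] at hzseg
  exact (eq_empty_iff_forall_notMem.1 hseg) _ ⟨hzseg, hzI⟩

lemma sphIlluminated_of_subset_openHemi (hK : IsSphBody d K) {x p q : Euc (d + 1)}
    (hx : x ∈ sphInt d (sphPolar d K)) (hp : p ∈ uSphere d) (hpx : ⟪p, x⟫ = 0)
    (hq : q ∈ sphBd d K) (hcov : {y ∈ sphPolar d K | ⟪q, y⟫ = 0} ⊆ openHemi d p) :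
    SphIlluminated d K p q := by
  rw [sphInt_sphPolar hK.1 hK.2.1.1] at hx
  have hqx := hx.2 q hq.1
  have hcov' : ∀ y ∈ sphPolar d K, ⟪y, q⟫ = 0 → 0 < ⟪p, y⟫ := fun y hy hyq =>
    (hcov ⟨hy, real_inner_comm y q ▸ hyq⟩).2
  refine ⟨?_, ?_, ?_⟩
  · rintro rfl
    simp [inner_neg_left, hpx] at hqx
  · obtain ⟨y, hy, hyq⟩ := exists_mem_sphPolar_inner_eq_zero hK hq
    refine eq_empty_of_forall_notMem ?_
    rintro _ ⟨⟨t, ht, rfl⟩, hint⟩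
    -- `⟪y, ·⟫` vanishes at `q` and is positive at `p`, hence nonnegative along the arc
    have hneg := (sphInt_eq_setOf_sphPolar hK ▸ hint).2 y hy
    rw [inner_nproj, inner_add_right, real_inner_smul_right, real_inner_smul_right, hyq,
      mul_zero, add_zero, real_inner_comm] at hneg
    have := mul_nonneg (sub_nonneg.2 ht.2) (hcov' y hy hyq).le
    exact hneg.not_ge (mul_nonneg (by positivity) this)
  · obtain ⟨s, hneg⟩ := exists_forall_inner_sub_smul_neg hp hq.1 hcov'
    have hv : q - s • p ≠ 0 := by
      intro h
      have : ⟪q - s • p, x⟫ = 0 := by rw [h, inner_zero_left]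
      rw [inner_sub_left, real_inner_smul_left, hpx] at this
      linarith
    refine ⟨nproj (q - s • p), ⟨nproj_mem_uSphere hv, ?_⟩, ?_⟩
    · exact Submodule.smul_mem _ _ (Submodule.mem_span_pair.2 ⟨-s, 1, by module⟩)
    · rw [sphInt_eq_setOf_sphPolar hK]
      refine ⟨nproj_mem_uSphere hv, fun y hy => ?_⟩
      rw [inner_nproj]
      exact mul_neg_of_pos_of_neg (by positivity) (hneg y hy)

lemma sphIlluminates_iff (hK : IsSphBody d K) {x : Euc (d + 1)}
    (hx : x ∈ sphInt d (sphPolar d K)) {S : Set (Euc (d + 1))} (hS : S ⊆ uSphere d)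
    (hSx : ∀ p ∈ S, ⟪p, x⟫ = 0) :
    SphIlluminates d K S ↔
      ∀ F, IsSphExposedFace d (sphPolar d K) F → ∃ p ∈ S, F ⊆ openHemi d p := by
  simp only [isSphExposedFace_sphPolar_iff hK]
  constructor
  · rintro h F ⟨q, hq, rfl⟩
    obtain ⟨p, hp, hill⟩ := h q hq
    exact ⟨p, hp, subset_openHemi_of_sphIlluminated hK hx (hSx p hp) hq hill⟩
  · intro h q hq
    obtain ⟨p, hp, hsub⟩ := h _ ⟨q, hq, rfl⟩
    exact ⟨p, hp, sphIlluminated_of_subset_openHemi hK hx (hS hp) (hSx p hp) hq hsub⟩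

lemma exists_mem_sphInt_sphPolar_greatSphere_eq (hK : IsSphBody d K) {u : Euc (d + 1)}
    (hu : u ∈ uSphere d) (hdisj : greatSphere d u ∩ K = ∅) :
    ∃ x ∈ sphInt d (sphPolar d K), greatSphere d x = greatSphere d u := by
  rw [sphInt_sphPolar hK.1 hK.2.1.1]
  rcases hK.2.1.forall_inner_neg_or_forall_inner_pos hdisj with h | h
  · exact ⟨u, ⟨hu, fun y hy => real_inner_comm u y ▸ h y hy⟩, rfl⟩
  · refine ⟨-u, ⟨by simpa [mem_uSphere_iff] using hu, fun y hy => ?_⟩, greatSphere_neg u⟩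
    simpa [real_inner_comm] using h y hy

lemma greatSphere_inter_eq_empty (hK : IsSphBody d K) {x : Euc (d + 1)}
    (hx : x ∈ sphInt d (sphPolar d K)) : greatSphere d x ∩ K = ∅ := by
  rw [sphInt_sphPolar hK.1 hK.2.1.1] at hx
  refine eq_empty_of_forall_notMem fun y ⟨⟨_, hxy⟩, hy⟩ => ?_
  exact (hx.2 y hy).ne (real_inner_comm x y ▸ hxy)

end illumination

/-- `I_{S^d}(K)` equals the minimum number of open hemispheres whose boundary great
spheres all pass through a common interior point of `K*` and which together cover every
exposed face of `K*`. -/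
theorem stmt12 (d : ℕ) (K : Set (Euc (d + 1))) (hK : IsSphBody d K) :
    sphIllumNumber d K = sInf {m : ℕ∞ | ∃ x ∈ sphInt d (sphPolar d K),
      ∃ s : Finset (Euc (d + 1)), ↑s ⊆ uSphere d ∧ (∀ p ∈ s, ⟪p, x⟫ = 0) ∧
        (∀ F, IsSphExposedFace d (sphPolar d K) F → ∃ p ∈ s, F ⊆ openHemi d p) ∧
        (s.card : ℕ∞) = m} := by
  unfold sphIllumNumber
  congr 1
  ext n
  constructor
  · rintro ⟨u, hu, hdisj, S, hSu, hill, rfl⟩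
    obtain ⟨x, hx, hxu⟩ := exists_mem_sphInt_sphPolar_greatSphere_eq hK hu hdisj
    rw [← hxu] at hSu
    have hS : (S : Set (Euc (d + 1))) ⊆ uSphere d := fun p hp => (hSu hp).1
    have hSx : ∀ p ∈ S, ⟪p, x⟫ = 0 := fun p hp => real_inner_comm p x ▸ (hSu hp).2
    exact ⟨x, hx, S, hS, hSx, (sphIlluminates_iff hK hx hS hSx).1 hill, rfl⟩
  · rintro ⟨x, hx, s, hs, hsx, hcov, rfl⟩
    refine ⟨x, hx.1, greatSphere_inter_eq_empty hK hx, s,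
      fun p hp => ⟨hs hp, real_inner_comm x p ▸ hsx p hp⟩, ?_, rfl⟩
    exact (sphIlluminates_iff hK hx hs hsx).2 hcov
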